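/- In the ADMM setting: for every k ≥ 1, u^k ∈ ∂f₁(x₁^k) and v^k ∈ ∂f₂(x₂^k), where ∂ denotes the convex subdifferential, u^k = -A₁*[y^k + (1-τ)ρ(A₁e₁^k + A₂e₂^k) + ρA₂(x₂^{k-1} - x₂^k)] and v^k = -A₂*[y^k + (1-τ)ρ(A₁e₁^k + A₂e₂^k)], with e₁^k = x₁^k - x₁*, e₂^k = x₂^k - x₂*. -/
import Mathlib

open Filter Topology Set
open scoped RealInnerProductSpace

/-- The subdifferential of convex analysis: the set of global lower-bounding slopes. -/
def SubderivAt {E : Type*} [NormedAddCommGroup E] [InnerProductSpace ℝ E]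
    (f : E → ℝ) (x : E) : Set E :=
  {g : E | ∀ y, f x + ⟪g, y - x⟫ ≤ f y}

variable {E₁ : Type*} [NormedAddCommGroup E₁] [InnerProductSpace ℝ E₁] [FiniteDimensional ℝ E₁]
variable {E₂ : Type*} [NormedAddCommGroup E₂] [InnerProductSpace ℝ E₂] [FiniteDimensional ℝ E₂]
variable {F : Type*} [NormedAddCommGroup F] [InnerProductSpace ℝ F] [FiniteDimensional ℝ F]

/-- The augmented Lagrangian function
`L_ρ(x₁, x₂, y) = f₁ x₁ + f₂ x₂ + ⟨y, A₁x₁ + A₂x₂ - b⟩ + (ρ/2)‖A₁x₁ + A₂x₂ - b‖²`. -/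
noncomputable def Augmented_Lagrangian_Function (f₁ : E₁ → ℝ) (f₂ : E₂ → ℝ)
    (A₁ : E₁ →L[ℝ] F) (A₂ : E₂ →L[ℝ] F) (b : F) (ρ : ℝ) (x₁ : E₁) (x₂ : E₂) (y : F) : ℝ :=
  f₁ x₁ + f₂ x₂ + ⟪y, A₁ x₁ + A₂ x₂ - b⟫ + ρ / 2 * ‖A₁ x₁ + A₂ x₂ - b‖ ^ 2

lemma subgrad_of_min_quad {E F : Type*}
    [NormedAddCommGroup E] [InnerProductSpace ℝ E] [FiniteDimensional ℝ E]
    [NormedAddCommGroup F] [InnerProductSpace ℝ F] [FiniteDimensional ℝ F]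
    (f : E → ℝ) (cf : ConvexOn ℝ Set.univ f) (A : E →L[ℝ] F) (y c : F) (ρ : ℝ) (hρ : 0 ≤ ρ)
    (x : E)
    (hmin : ∀ z : E, f x + ⟪y, A x + c⟫ + ρ / 2 * ‖A x + c‖ ^ 2 ≤
      f z + ⟪y, A z + c⟫ + ρ / 2 * ‖A z + c‖ ^ 2) :
    -(ContinuousLinearMap.adjoint A (y + ρ • (A x + c))) ∈ SubderivAt f x := by
  intro z
  rw [inner_neg_left, ContinuousLinearMap.adjoint_inner_left]
  set v := z - x with hv
  have key : ∀ t : ℝ, 0 < t → t ≤ 1 →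
      f x ≤ f z + ⟪y + ρ • (A x + c), A v⟫ + ρ * t / 2 * ‖A v‖ ^ 2 := by
    intro t ht ht1
    have hconv : f (x + t • v) ≤ (1 - t) * f x + t * f z := by
      have h := cf.2 (Set.mem_univ x) (Set.mem_univ z)
        (by linarith : (0:ℝ) ≤ 1 - t) ht.le (by ring)
      have hx : (1 - t) • x + t • z = x + t • v := by rw [hv]; module
      rw [hx] at h
      simpa [smul_eq_mul] using h
    have hm := hmin (x + t • v)
    have hA : A (x + t • v) + c = (A x + c) + t • A v := by
      simp [map_add, map_smul]; abel
    rw [hA] at hm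
    have hin : ⟪y, (A x + c) + t • A v⟫ = ⟪y, A x + c⟫ + t * ⟪y, A v⟫ := by
      rw [inner_add_right, real_inner_smul_right]
    have hnorm : ‖(A x + c) + t • A v‖ ^ 2
        = ‖A x + c‖ ^ 2 + 2 * (t * ⟪A x + c, A v⟫) + t ^ 2 * ‖A v‖ ^ 2 := by
      rw [norm_add_sq_real, real_inner_smul_right, norm_smul]
      rw [mul_pow]
      simp [Real.norm_eq_abs, sq_abs]
    rw [hin, hnorm] at hm
    have hw : ⟪y + ρ • (A x + c), A v⟫ = ⟪y, A v⟫ + ρ * ⟪A x + c, A v⟫ := by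
      rw [inner_add_left, real_inner_smul_left]
    have hstep : t * f x ≤ t * (f z + ⟪y + ρ • (A x + c), A v⟫ + ρ * t / 2 * ‖A v‖ ^ 2) := by
      rw [hw]; nlinarith [hm, hconv]
    exact le_of_mul_le_mul_left (by linarith [hstep]) ht
  have hC : 0 ≤ ρ / 2 * ‖A v‖ ^ 2 := by positivity
  have final : f x ≤ f z + ⟪y + ρ • (A x + c), A v⟫ := by
    apply le_of_forall_pos_le_add
    intro ε hε
    set C := ρ / 2 * ‖A v‖ ^ 2 with hCdef
    have hC1 : (0:ℝ) < C + 1 := by linarith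
    set t := min 1 (ε / (C + 1)) with htdef
    have ht0 : 0 < t := lt_min one_pos (div_pos hε hC1)
    have ht1 : t ≤ 1 := min_le_left _ _
    have hk := key t ht0 ht1
    have htC : ρ * t / 2 * ‖A v‖ ^ 2 ≤ ε := by
      have h1 : ρ * t / 2 * ‖A v‖ ^ 2 = t * C := by rw [hCdef]; ring
      rw [h1]
      have ht2 : t ≤ ε / (C + 1) := min_le_right _ _
      have h2 : t * C ≤ (ε / (C + 1)) * C := by nlinarith
      calc t * C ≤ (ε / (C + 1)) * C := h2
        _ ≤ ε := by rw [div_mul_eq_mul_div, div_le_iff₀ hC1]; nlinarith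
    linarith
  linarith

theorem uvBelongsToSubgradient
    (f₁ : E₁ → ℝ) (f₂ : E₂ → ℝ) (A₁ : E₁ →L[ℝ] F) (A₂ : E₂ →L[ℝ] F) (b : F)
    (lscf₁ : LowerSemicontinuous f₁) (lscf₂ : LowerSemicontinuous f₂)
    (cf₁ : ConvexOn ℝ Set.univ f₁) (cf₂ : ConvexOn ℝ Set.univ f₂)
    -- a KKT pair (x₁*, x₂*, y*) of the problem
    (x₁s : E₁) (x₂s : E₂) (ys : F)
    (kkt₁ : -(ContinuousLinearMap.adjoint A₁ ys) ∈ SubderivAt f₁ x₁s)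
    (kkt₂ : -(ContinuousLinearMap.adjoint A₂ ys) ∈ SubderivAt f₂ x₂s)
    (kkt₃ : A₁ x₁s + A₂ x₂s = b)
    -- the parameters and the ADMM iterates
    (ρ τ : ℝ) (hρ : 0 < ρ) (hτ₀ : 0 < τ) (hτ₁ : τ < (1 + Real.sqrt 5) / 2)
    (x₁ : ℕ → E₁) (x₂ : ℕ → E₂) (y : ℕ → F)
    (iterx₁ : ∀ k, IsMinOn
      (fun a => Augmented_Lagrangian_Function f₁ f₂ A₁ A₂ b ρ a (x₂ k) (y k))
      Set.univ (x₁ (k + 1)))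
    (uiterx₁ : ∀ k a, IsMinOn
      (fun a => Augmented_Lagrangian_Function f₁ f₂ A₁ A₂ b ρ a (x₂ k) (y k))
      Set.univ a → a = x₁ (k + 1))
    (iterx₂ : ∀ k, IsMinOn
      (fun a => Augmented_Lagrangian_Function f₁ f₂ A₁ A₂ b ρ (x₁ (k + 1)) a (y k))
      Set.univ (x₂ (k + 1)))
    (uiterx₂ : ∀ k a, IsMinOn
      (fun a => Augmented_Lagrangian_Function f₁ f₂ A₁ A₂ b ρ (x₁ (k + 1)) a (y k))
      Set.univ a → a = x₂ (k + 1))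
    (itery : ∀ k, y (k + 1) = y k + (τ * ρ) • (A₁ (x₁ (k + 1)) + A₂ (x₂ (k + 1)) - b)) :
    ∀ k : ℕ, 1 ≤ k →
      -(ContinuousLinearMap.adjoint A₁
          (y k + ((1 - τ) * ρ) • (A₁ (x₁ k - x₁s) + A₂ (x₂ k - x₂s))
            + ρ • (A₂ (x₂ (k - 1) - x₂ k)))) ∈ SubderivAt f₁ (x₁ k) ∧
      -(ContinuousLinearMap.adjoint A₂
          (y k + ((1 - τ) * ρ) • (A₁ (x₁ k - x₁s) + A₂ (x₂ k - x₂s))))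
        ∈ SubderivAt f₂ (x₂ k) := by
  intro k hk
  obtain ⟨m, rfl⟩ : ∃ m, k = m + 1 := ⟨k - 1, (Nat.succ_pred_eq_of_pos hk).symm⟩
  have hmsub : m + 1 - 1 = m := rfl
  constructor
  · -- part 1
    have hmin : ∀ z : E₁,
        (fun a => f₁ a + f₂ (x₂ m)) (x₁ (m + 1))
          + ⟪y m, A₁ (x₁ (m + 1)) + (A₂ (x₂ m) - b)⟫
          + ρ / 2 * ‖A₁ (x₁ (m + 1)) + (A₂ (x₂ m) - b)‖ ^ 2 ≤
        (fun a => f₁ a + f₂ (x₂ m)) z + ⟪y m, A₁ z + (A₂ (x₂ m) - b)⟫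
          + ρ / 2 * ‖A₁ z + (A₂ (x₂ m) - b)‖ ^ 2 := by
      intro z
      have h := iterx₁ m (Set.mem_univ z)
      simp only [Augmented_Lagrangian_Function, Set.mem_setOf_eq] at h
      have e1 : ∀ w : E₁, A₁ w + (A₂ (x₂ m) - b) = A₁ w + A₂ (x₂ m) - b := fun w => by abel
      simp only [e1]
      linarith [h]
    have hcf : ConvexOn ℝ Set.univ (fun a => f₁ a + f₂ (x₂ m)) :=
      cf₁.add (convexOn_const _ convex_univ)
    have hsub := subgrad_of_min_quad (fun a => f₁ a + f₂ (x₂ m)) hcf A₁ (y m)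
      (A₂ (x₂ m) - b) ρ hρ.le (x₁ (m + 1)) hmin
    have hvec : y (m + 1)
        + ((1 - τ) * ρ) • (A₁ (x₁ (m + 1) - x₁s) + A₂ (x₂ (m + 1) - x₂s))
        + ρ • (A₂ (x₂ (m + 1 - 1) - x₂ (m + 1)))
        = y m + ρ • (A₁ (x₁ (m + 1)) + (A₂ (x₂ m) - b)) := by
      rw [hmsub, itery m, ← kkt₃]
      simp only [map_sub]
      module
    rw [hvec]
    intro z
    have := hsub z
    simp only at this
    linarith
  · -- part 2
    have hmin : ∀ z : E₂,
        (fun a => f₂ a + f₁ (x₁ (m + 1))) (x₂ (m + 1))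
          + ⟪y m, A₂ (x₂ (m + 1)) + (A₁ (x₁ (m + 1)) - b)⟫
          + ρ / 2 * ‖A₂ (x₂ (m + 1)) + (A₁ (x₁ (m + 1)) - b)‖ ^ 2 ≤
        (fun a => f₂ a + f₁ (x₁ (m + 1))) z + ⟪y m, A₂ z + (A₁ (x₁ (m + 1)) - b)⟫
          + ρ / 2 * ‖A₂ z + (A₁ (x₁ (m + 1)) - b)‖ ^ 2 := by
      intro z
      have h := iterx₂ m (Set.mem_univ z)
      simp only [Augmented_Lagrangian_Function, Set.mem_setOf_eq] at h
      have e1 : ∀ w : E₂, A₂ w + (A₁ (x₁ (m + 1)) - b)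
          = A₁ (x₁ (m + 1)) + A₂ w - b := fun w => by abel
      simp only [e1]
      linarith [h]
    have hcf : ConvexOn ℝ Set.univ (fun a => f₂ a + f₁ (x₁ (m + 1))) :=
      cf₂.add (convexOn_const _ convex_univ)
    have hsub := subgrad_of_min_quad (fun a => f₂ a + f₁ (x₁ (m + 1))) hcf A₂ (y m)
      (A₁ (x₁ (m + 1)) - b) ρ hρ.le (x₂ (m + 1)) hmin
    have hvec : y (m + 1)
        + ((1 - τ) * ρ) • (A₁ (x₁ (m + 1) - x₁s) + A₂ (x₂ (m + 1) - x₂s))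
        = y m + ρ • (A₂ (x₂ (m + 1)) + (A₁ (x₁ (m + 1)) - b)) := by
      rw [itery m, ← kkt₃]
      simp only [map_sub]
      module
    rw [hvec]
    intro z
    have := hsub z
    simp only at this
    linarith
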